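/- arXiv:1406.3760 — 6 statements merged into one kernel-verified Lean document; each statement's English description precedes it below -/
import Mathlib

section
/- Let H be a real Hilbert space and let T be a densely defined unbounded operator on H that is selfadjoint (equal to its adjoint as an unbounded operator). Assume T is Fredholm, i.e., the kernel of T is finite-dimensional and the range of T is closed in H. Then 0 is not an accumulation point of the spectrum of T: there exists ε > 0 such that for every real number μ with 0 < |μ| < ε, the operator μ·id − T, regarded as a map from the domain of T to H, is bijective. -/
/-! A selfadjoint `T` is closed and `ker T = (ran T)ᗮ`. As `ran T` is closed, the open mapping
theorem on the (complete) graph of `T` gives `‖x‖ ≤ C ‖T x‖` for `x ∈ ran T = (ker T)ᗮ`.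
Splitting `x = r + k` along `ran T ⊕ ker T`, Pythagoras then yields
`|μ| ‖x‖ ≤ ‖μ x - T x‖` on the whole domain once `|μ| < 1 / (2C)`. Such a lower bound makes
`μ - T` injective with closed range, and by selfadjointness `(ran (μ - T))ᗮ = ker (μ - T) = 0`. -/

open RealInnerProductSpace

namespace LinearPMap

section Banach

variable {𝕜 E F : Type*} [NontriviallyNormedField 𝕜]
  [NormedAddCommGroup E] [NormedSpace 𝕜 E] [CompleteSpace E]
  [NormedAddCommGroup F] [NormedSpace 𝕜 F] [CompleteSpace F]

theorem IsClosed.exists_preimage_norm_le {T : E →ₗ.[𝕜] F} (hT : T.IsClosed)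
    (hran : _root_.IsClosed (LinearMap.range T.toFun : Set F)) :
    ∃ C > 0, ∀ x : T.domain, ∃ x' : T.domain, T x' = T x ∧ ‖(x' : E)‖ ≤ C * ‖T x‖ := by
  have : CompleteSpace T.graph :=
    (show _root_.IsClosed (T.graph : Set (E × F)) from hT).completeSpace_coe
  have : CompleteSpace (LinearMap.range T.toFun) := hran.completeSpace_coe
  let π : T.graph →L[𝕜] LinearMap.range T.toFun :=
    ((ContinuousLinearMap.snd 𝕜 E F).comp T.graph.subtypeL).codRestrict _ fun g => by
      obtain ⟨x, -, hx⟩ := (T.mem_graph_iff).mp g.2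
      exact ⟨x, hx⟩
  have hπ : Function.Surjective π := by
    rintro ⟨_, x, rfl⟩
    exact ⟨⟨_, T.mem_graph x⟩, rfl⟩
  obtain ⟨C, hC, hpre⟩ := π.exists_preimage_norm_le hπ
  refine ⟨C, hC, fun x => ?_⟩
  obtain ⟨⟨g, hg⟩, hgx, hgC⟩ := hpre ⟨T x, x, rfl⟩
  obtain ⟨x', hx'_fst, hx'_snd⟩ := (T.mem_graph_iff).mp hg
  refine ⟨x', hx'_snd.trans (congrArg Subtype.val hgx), ?_⟩
  calc ‖(x' : E)‖ = ‖g.1‖ := by rw [hx'_fst]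
    _ ≤ ‖g‖ := norm_fst_le g
    _ ≤ C * ‖T x‖ := hgC

theorem IsClosed.isClosed_range_smul_sub {T : E →ₗ.[𝕜] E} (hT : T.IsClosed) {μ : 𝕜} {c : ℝ}
    (hc : 0 < c) (hbdd : ∀ x : T.domain, c * ‖(x : E)‖ ≤ ‖μ • (x : E) - T x‖) :
    _root_.IsClosed (Set.range fun x : T.domain => μ • (x : E) - T x) := by
  have : CompleteSpace T.graph :=
    (show _root_.IsClosed (T.graph : Set (E × E)) from hT).completeSpace_coe
  let Φ : T.graph →L[𝕜] E :=
    (μ • ContinuousLinearMap.fst 𝕜 E E - ContinuousLinearMap.snd 𝕜 E E).comp T.graph.subtypeL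
  have hΦ : ∀ x : T.domain, Φ ⟨_, T.mem_graph x⟩ = μ • (x : E) - T x := fun x => rfl
  have hrange : Set.range Φ = Set.range fun x : T.domain => μ • (x : E) - T x := by
    ext y
    constructor
    · rintro ⟨⟨g, hg⟩, rfl⟩
      obtain ⟨x, rfl⟩ := (T.mem_graph_iff').mp hg
      exact ⟨x, rfl⟩
    · rintro ⟨x, rfl⟩
      exact ⟨_, hΦ x⟩
  have hbound : ∀ g, ‖g‖ ≤ (⟨(1 + ‖μ‖) / c + 1, by positivity⟩ : NNReal) * ‖Φ g‖ := by
    rintro ⟨g, hg⟩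
    obtain ⟨x, rfl⟩ := (T.mem_graph_iff').mp hg
    change ‖((x : E), T x)‖ ≤ ((1 + ‖μ‖) / c + 1) * ‖μ • (x : E) - T x‖
    rw [Prod.norm_def]
    have hx : ‖(x : E)‖ ≤ ‖μ • (x : E) - T x‖ / c := by
      rw [le_div_iff₀ hc, mul_comm]
      exact hbdd x
    have hTx : ‖T x‖ ≤ ‖μ‖ * ‖(x : E)‖ + ‖μ • (x : E) - T x‖ := by
      calc ‖T x‖ = ‖μ • (x : E) - (μ • (x : E) - T x)‖ := by rw [sub_sub_cancel]
        _ ≤ ‖μ • (x : E)‖ + ‖μ • (x : E) - T x‖ := norm_sub_le _ _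
        _ = ‖μ‖ * ‖(x : E)‖ + ‖μ • (x : E) - T x‖ := by rw [norm_smul]
    calc max ‖(x : E)‖ ‖T x‖ ≤ ‖(x : E)‖ + ‖T x‖ :=
          max_le_add_of_nonneg (norm_nonneg _) (norm_nonneg _)
      _ ≤ (1 + ‖μ‖) * (‖μ • (x : E) - T x‖ / c) + ‖μ • (x : E) - T x‖ := by
          nlinarith [norm_nonneg μ]
      _ = ((1 + ‖μ‖) / c + 1) * ‖μ • (x : E) - T x‖ := by ring
  rw [← hrange]
  exact (Φ.antilipschitz_of_bound hbound).isClosed_range Φ.uniformContinuous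

end Banach

section Hilbert

variable {H : Type*} [NormedAddCommGroup H] [InnerProductSpace ℝ H] [CompleteSpace H]
  {T : H →ₗ.[ℝ] H}

theorem _root_.IsSelfAdjoint.exists_mem_domain_apply_eq_of_inner (hT : IsSelfAdjoint T) {y w : H}
    (h : ∀ x : T.domain, ⟪w, x⟫ = ⟪y, T x⟫) : ∃ hy : y ∈ T.domain, T ⟨y, hy⟩ = w := by
  have hy : y ∈ T†.domain := mem_adjoint_domain_of_exists y ⟨w, h⟩
  have hTy : T† ⟨y, hy⟩ = w := adjoint_apply_eq hT.dense_domain ⟨y, hy⟩ h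
  exact ⟨_, (apply_comp_inclusion (isSelfAdjoint_def.mp hT).le ⟨y, hy⟩).symm.trans hTy⟩

theorem _root_.IsSelfAdjoint.isFormalAdjoint (hT : IsSelfAdjoint T) : T.IsFormalAdjoint T := by
  have h := adjoint_isFormalAdjoint hT.dense_domain
  rwa [isSelfAdjoint_def.mp hT] at h

theorem _root_.IsSelfAdjoint.mem_orthogonal_range_iff (hT : IsSelfAdjoint T) {y : H} :
    y ∈ (LinearMap.range T.toFun)ᗮ ↔ ∃ hy : y ∈ T.domain, T ⟨y, hy⟩ = 0 := by
  rw [Submodule.mem_orthogonal]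
  constructor
  · intro h
    refine hT.exists_mem_domain_apply_eq_of_inner fun x => ?_
    rw [inner_zero_left, real_inner_comm]
    exact (h _ ⟨x, rfl⟩).symm
  · rintro ⟨hy, hTy⟩ _ ⟨x, rfl⟩
    change ⟪T x, y⟫ = 0
    exact (hT.isFormalAdjoint x ⟨y, hy⟩).trans (by rw [hTy, inner_zero_right])

theorem _root_.IsSelfAdjoint.exists_norm_le_mul_norm_apply (hT : IsSelfAdjoint T)
    (hran : _root_.IsClosed (LinearMap.range T.toFun : Set H)) :
    ∃ C > 0, ∀ x : T.domain, (x : H) ∈ LinearMap.range T.toFun → ‖(x : H)‖ ≤ C * ‖T x‖ := by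
  obtain ⟨C, hC, hpre⟩ := hT.isClosed.exists_preimage_norm_le hran
  refine ⟨C, hC, fun x hx => ?_⟩
  obtain ⟨x', hx'x, hx'C⟩ := hpre x
  have hker : ((x' - x : T.domain) : H) ∈ (LinearMap.range T.toFun)ᗮ :=
    hT.mem_orthogonal_range_iff.mpr ⟨(x' - x).2, by rw [Subtype.coe_eta, map_sub, hx'x, sub_self]⟩
  have hpyth := norm_add_sq_eq_norm_sq_add_norm_sq_real
    (Submodule.inner_right_of_mem_orthogonal hx hker)
  rw [Submodule.coe_sub, add_sub_cancel] at hpyth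
  have hxx' : ‖(x : H)‖ ≤ ‖(x' : H)‖ := by nlinarith [norm_nonneg (x : H), norm_nonneg (x' : H)]
  exact hxx'.trans hx'C

theorem _root_.IsSelfAdjoint.exists_abs_mul_norm_le_norm_smul_sub (hT : IsSelfAdjoint T)
    (hran : _root_.IsClosed (LinearMap.range T.toFun : Set H)) :
    ∃ ε > 0, ∀ μ : ℝ, |μ| < ε → ∀ x : T.domain, |μ| * ‖(x : H)‖ ≤ ‖μ • (x : H) - T x‖ := by
  obtain ⟨C, hC, hbdd⟩ := hT.exists_norm_le_mul_norm_apply hran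
  set R := LinearMap.range T.toFun
  have : CompleteSpace R := hran.completeSpace_coe
  refine ⟨(2 * C)⁻¹, by positivity, fun μ hμ x => ?_⟩
  have hCμ : 2 * C * |μ| < 1 := by
    have h := mul_lt_mul_of_pos_left hμ (by positivity : 0 < 2 * C)
    rwa [mul_inv_cancel₀ (by positivity)] at h
  obtain ⟨r, hr, k, hk, hx⟩ := R.exists_add_mem_mem_orthogonal (x : H)
  obtain ⟨hkT, hTk⟩ := hT.mem_orthogonal_range_iff.mp hk
  set r' : T.domain := x - ⟨k, hkT⟩
  have hr' : (r' : H) = r := by simp [r', hx]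
  have hTr' : T r' = T x := by rw [map_sub, hTk, sub_zero]
  have hsplit : μ • (x : H) - T x = (μ • r - T r') + μ • k := by rw [hx, hTr']; module
  have hrR : μ • r - T r' ∈ R := sub_mem (R.smul_mem μ hr) ⟨r', rfl⟩
  have hr_bound : |μ| * ‖r‖ ≤ ‖μ • r - T r'‖ := by
    have h1 : ‖r‖ ≤ C * ‖T r'‖ := hr' ▸ hbdd r' (hr' ▸ hr)
    have h2 : ‖T r'‖ - ‖μ • r‖ ≤ ‖μ • r - T r'‖ := norm_sub_rev (T r') _ ▸ norm_sub_norm_le _ _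
    rw [norm_smul, Real.norm_eq_abs] at h2
    nlinarith [abs_nonneg μ, norm_nonneg r]
  have hx_sq := norm_add_sq_eq_norm_sq_add_norm_sq_real (R.inner_right_of_mem_orthogonal hr hk)
  have hsplit_sq := norm_add_sq_eq_norm_sq_add_norm_sq_real
    (R.inner_right_of_mem_orthogonal hrR (R.orthogonal.smul_mem μ hk))
  rw [← hx] at hx_sq
  rw [← hsplit, norm_smul, Real.norm_eq_abs] at hsplit_sq
  refine (pow_le_pow_iff_left₀ (by positivity) (norm_nonneg _) two_ne_zero).mp ?_
  nlinarith [mul_self_le_mul_self (by positivity) hr_bound, congrArg (|μ| ^ 2 * ·) hx_sq]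

theorem _root_.IsSelfAdjoint.bijective_smul_sub_of_mul_norm_le (hT : IsSelfAdjoint T) {μ c : ℝ}
    (hc : 0 < c) (hbdd : ∀ x : T.domain, c * ‖(x : H)‖ ≤ ‖μ • (x : H) - T x‖) :
    Function.Bijective (fun x : T.domain => μ • (x : H) - T x) := by
  let L : T.domain →ₗ[ℝ] H := μ • T.domain.subtype - T.toFun
  change Function.Bijective L
  have hinj : Function.Injective L := by
    refine (injective_iff_map_eq_zero L).mpr fun x hx => ?_
    have h := hbdd x
    rw [show μ • (x : H) - T x = 0 from hx, norm_zero] at h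
    exact norm_le_zero_iff.mp (nonpos_of_mul_nonpos_right h hc)
  have hclosed : _root_.IsClosed (LinearMap.range L : Set H) :=
    hT.isClosed.isClosed_range_smul_sub hc hbdd
  have : CompleteSpace (LinearMap.range L) := hclosed.completeSpace_coe
  have hperp : (LinearMap.range L)ᗮ = ⊥ := by
    refine (Submodule.eq_bot_iff _).mpr fun y hy => ?_
    rw [Submodule.mem_orthogonal] at hy
    obtain ⟨hyT, hTy⟩ := hT.exists_mem_domain_apply_eq_of_inner (w := μ • y) fun x => by
      have h : ⟪μ • (x : H) - T x, y⟫ = 0 := hy _ ⟨x, rfl⟩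
      rw [inner_sub_left, sub_eq_zero, real_inner_smul_left] at h
      rw [real_inner_smul_left, real_inner_comm, h, real_inner_comm]
    have h0 : L ⟨y, hyT⟩ = L 0 := by
      change μ • y - T ⟨y, hyT⟩ = L 0
      rw [hTy, sub_self, _root_.map_zero L]
    exact congrArg Subtype.val (hinj h0)
  exact ⟨hinj, LinearMap.range_eq_top.mp (Submodule.orthogonal_eq_bot_iff.mp hperp)⟩

end Hilbert

end LinearPMap

theorem stmt0_general {H : Type*} [NormedAddCommGroup H] [InnerProductSpace ℝ H] [CompleteSpace H]
    (T : H →ₗ.[ℝ] H)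
    (hsa : T.adjoint = T)
    (hran : IsClosed (LinearMap.range T.toFun : Set H)) :
    ∃ ε > (0 : ℝ), ∀ μ : ℝ, 0 < |μ| → |μ| < ε →
      Function.Bijective (fun x : T.domain => μ • (x : H) - T x) := by
  have hT : IsSelfAdjoint T := hsa
  obtain ⟨ε, hε, hbdd⟩ := hT.exists_abs_mul_norm_le_norm_smul_sub hran
  exact ⟨ε, hε, fun μ hμ hμε => hT.bijective_smul_sub_of_mul_norm_le hμ (hbdd μ hμε)⟩

/-- If `T` is a densely defined selfadjoint unbounded operator on a real
Hilbert space `H` which is Fredholm (finite-dimensional kernel and closed range), then `0` is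
not an accumulation point of the spectrum of `T`: there is `ε > 0` such that for all real `μ`
with `0 < |μ| < ε`, the operator `μ • id - T : T.domain → H` is bijective. -/
theorem stmt0 {H : Type*} [NormedAddCommGroup H] [InnerProductSpace ℝ H] [CompleteSpace H]
    (T : H →ₗ.[ℝ] H) (hdense : Dense (T.domain : Set H))
    (hsa : T.adjoint = T)
    (hker : FiniteDimensional ℝ (LinearMap.ker T.toFun))
    (hran : IsClosed (LinearMap.range T.toFun : Set H)) :
    ∃ ε > (0 : ℝ), ∀ μ : ℝ, 0 < |μ| → |μ| < ε →
      Function.Bijective (fun x : T.domain => μ • (x : H) - T x) :=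
  stmt0_general T hsa hran
end

section
/- Let W and H be real Hilbert spaces and ι : W → H an injective continuous linear map. Let A : ℝ → L(W,H) be a family of continuous linear maps that is differentiable at t₀ in operator norm, such that each A_t is symmetric relative to ι, i.e., ⟨A_t x, ι y⟩_H = ⟨ι x, A_t y⟩_H for all x, y ∈ W. Let σ : ℝ → L(ℝᵐ,W) and π : ℝ → L(H,ℝᵐ) be families differentiable at t₀ such that for all t: π_t ∘ ι ∘ σ_t = id on ℝᵐ, and ⟨π_t h, e⟩ = ⟨h, ι(σ_t e)⟩_H for all h ∈ H and e ∈ ℝᵐ. Set B_t := π_t ∘ A_t ∘ σ_t : ℝᵐ → ℝᵐ. Then for every δ ∈ ℝ and every u ∈ ℝᵐ satisfying A_{t₀}(σ_{t₀} u) = δ·ι(σ_{t₀} u), one has ⟨Ḃ_{t₀} u, u⟩ = ⟨Ȧ_{t₀}(σ_{t₀} u), ι(σ_{t₀} u)⟩_H, where Ḃ_{t₀} and Ȧ_{t₀} denote the derivatives of the families B and A at t₀. -/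
/-!
Differentiating `π t ∘ ι ∘ σ t = id` at `t₀` gives `π' ι σ + π ι σ' = 0`. By the product rule
`Ḃ u = π' A σ u + π A' σ u + π A σ' u`. Pairing with `u`, the adjointness of `π` and `ισ` together
with the symmetry of `A` turns the eigenvalue equation `A σ u = δ ι σ u` into
`⟪π' A σ u + π A σ' u, u⟫ = δ ⟪π' ι σ u + π ι σ' u, u⟫ = 0`, and the middle term is
`⟪A' σ u, ι σ u⟫`.
-/

open scoped RealInnerProductSpace

theorem HasDerivAt.clm_comp_add_eq_zero_of_comp_eq_const {𝕜 E F G : Type*}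
    [NontriviallyNormedField 𝕜] [NormedAddCommGroup E] [NormedSpace 𝕜 E]
    [NormedAddCommGroup F] [NormedSpace 𝕜 F] [NormedAddCommGroup G] [NormedSpace 𝕜 G]
    {P : 𝕜 → F →L[𝕜] G} {P' : F →L[𝕜] G} {Q : 𝕜 → E →L[𝕜] F} {Q' : E →L[𝕜] F}
    {C : E →L[𝕜] G} {t : 𝕜} (hP : HasDerivAt P P' t) (hQ : HasDerivAt Q Q' t)
    (hPQ : ∀ s, (P s).comp (Q s) = C) :
    P'.comp (Q t) + (P t).comp Q' = 0 :=
  (hP.clm_comp hQ).unique (by simpa only [hPQ] using hasDerivAt_const t C)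

theorem inner_apply_eq_mul_of_apply_eq_smul {W H E : Type*}
    [NormedAddCommGroup W] [InnerProductSpace ℝ W] [NormedAddCommGroup H] [InnerProductSpace ℝ H]
    [NormedAddCommGroup E] [InnerProductSpace ℝ E]
    {ι : W →L[ℝ] H} {A : W →L[ℝ] H} (hA : ∀ x y, ⟪A x, ι y⟫ = ⟪ι x, A y⟫)
    {π : H →L[ℝ] E} {σ : E →L[ℝ] W} (hπσ : ∀ h e, ⟪π h, e⟫ = ⟪h, ι (σ e)⟫)
    {δ : ℝ} {u : E} (hu : A (σ u) = δ • ι (σ u)) (w : W) :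
    ⟪π (A w), u⟫ = δ * ⟪π (ι w), u⟫ := by
  rw [hπσ, hA, hu, hπσ, real_inner_smul_right]

theorem stmt3_general {W H : Type*}
    [NormedAddCommGroup W] [InnerProductSpace ℝ W]
    [NormedAddCommGroup H] [InnerProductSpace ℝ H]
    (ι : W →L[ℝ] H) (m : ℕ) (t₀ : ℝ)
    (A : ℝ → W →L[ℝ] H) (A' : W →L[ℝ] H) (hA : HasDerivAt A A' t₀)
    (hAsymm : ∀ t (x y : W), ⟪A t x, ι y⟫ = ⟪ι x, A t y⟫)
    (σ : ℝ → EuclideanSpace ℝ (Fin m) →L[ℝ] W)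
    (σ' : EuclideanSpace ℝ (Fin m) →L[ℝ] W) (hσ : HasDerivAt σ σ' t₀)
    (π : ℝ → H →L[ℝ] EuclideanSpace ℝ (Fin m))
    (π' : H →L[ℝ] EuclideanSpace ℝ (Fin m)) (hπ : HasDerivAt π π' t₀)
    (hπισ : ∀ t e, π t (ι (σ t e)) = e)
    (hπadj : ∀ t (h : H) e, ⟪π t h, e⟫ = ⟪h, ι (σ t e)⟫)
    (B' : EuclideanSpace ℝ (Fin m) →L[ℝ] EuclideanSpace ℝ (Fin m))
    (hB : HasDerivAt (fun t => (π t).comp ((A t).comp (σ t))) B' t₀) :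
    ∀ (δ : ℝ) (u : EuclideanSpace ℝ (Fin m)),
      A t₀ (σ t₀ u) = δ • ι (σ t₀ u) →
      ⟪B' u, u⟫ = ⟪A' (σ t₀ u), ι (σ t₀ u)⟫ := by
  intro δ u hu
  have hB' : B' = π'.comp ((A t₀).comp (σ t₀)) +
      (π t₀).comp (A'.comp (σ t₀) + (A t₀).comp σ') :=
    hB.unique (hπ.clm_comp (hA.clm_comp hσ))
  have hισ : HasDerivAt (fun t => ι.comp (σ t)) (ι.comp σ') t₀ := by
    simpa using (hasDerivAt_const t₀ ι).clm_comp hσ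
  have hcancel : π' (ι (σ t₀ u)) + π t₀ (ι (σ' u)) = 0 := by
    simpa using congr($(hπ.clm_comp_add_eq_zero_of_comp_eq_const hισ
      (C := ContinuousLinearMap.id ℝ _) fun t => ContinuousLinearMap.ext (hπισ t)) u)
  have eigen := inner_apply_eq_mul_of_apply_eq_smul (hAsymm t₀) (hπadj t₀) hu
  calc ⟪B' u, u⟫
      = ⟪π' (A t₀ (σ t₀ u)), u⟫ + ⟪π t₀ (A t₀ (σ' u)), u⟫ + ⟪π t₀ (A' (σ t₀ u)), u⟫ := by
        rw [hB']
        simp only [add_apply, ContinuousLinearMap.comp_apply, map_add,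
          inner_add_left]
        ring
    _ = δ * ⟪π' (ι (σ t₀ u)) + π t₀ (ι (σ' u)), u⟫ + ⟪A' (σ t₀ u), ι (σ t₀ u)⟫ := by
        rw [hu, map_smul, real_inner_smul_left, eigen, hπadj t₀ (A' _) u, inner_add_left, mul_add]
    _ = ⟪A' (σ t₀ u), ι (σ t₀ u)⟫ := by
        rw [hcancel, inner_zero_left, mul_zero, zero_add]

/-- Let `ι : W → H` be an injective continuous linear map between real
Hilbert spaces, `A : ℝ → L(W,H)` differentiable at `t₀` with derivative `A'`, each `A t`
symmetric relative to `ι`. Let `σ : ℝ → L(ℝᵐ,W)`, `π : ℝ → L(H,ℝᵐ)` be differentiable at `t₀`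
with `π t ∘ ι ∘ σ t = id` and `⟪π t h, e⟫ = ⟪h, ι (σ t e)⟫`. If `B t = π t ∘ A t ∘ σ t` has
derivative `B'` at `t₀`, then for all `δ ∈ ℝ` and `u` with `A t₀ (σ t₀ u) = δ • ι (σ t₀ u)`,
we have `⟪B' u, u⟫ = ⟪A' (σ t₀ u), ι (σ t₀ u)⟫`. -/
theorem stmt3 {W H : Type*}
    [NormedAddCommGroup W] [InnerProductSpace ℝ W] [CompleteSpace W]
    [NormedAddCommGroup H] [InnerProductSpace ℝ H] [CompleteSpace H]
    (ι : W →L[ℝ] H) (hι : Function.Injective ι) (m : ℕ) (t₀ : ℝ)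
    (A : ℝ → W →L[ℝ] H) (A' : W →L[ℝ] H) (hA : HasDerivAt A A' t₀)
    (hAsymm : ∀ t (x y : W), ⟪A t x, ι y⟫ = ⟪ι x, A t y⟫)
    (σ : ℝ → EuclideanSpace ℝ (Fin m) →L[ℝ] W)
    (σ' : EuclideanSpace ℝ (Fin m) →L[ℝ] W) (hσ : HasDerivAt σ σ' t₀)
    (π : ℝ → H →L[ℝ] EuclideanSpace ℝ (Fin m))
    (π' : H →L[ℝ] EuclideanSpace ℝ (Fin m)) (hπ : HasDerivAt π π' t₀)
    (hπισ : ∀ t e, π t (ι (σ t e)) = e)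
    (hπadj : ∀ t (h : H) e, ⟪π t h, e⟫ = ⟪h, ι (σ t e)⟫)
    (B' : EuclideanSpace ℝ (Fin m) →L[ℝ] EuclideanSpace ℝ (Fin m))
    (hB : HasDerivAt (fun t => (π t).comp ((A t).comp (σ t))) B' t₀) :
    ∀ (δ : ℝ) (u : EuclideanSpace ℝ (Fin m)),
      A t₀ (σ t₀ u) = δ • ι (σ t₀ u) →
      ⟪B' u, u⟫ = ⟪A' (σ t₀ u), ι (σ t₀ u)⟫ :=
  stmt3_general ι m t₀ A A' hA hAsymm σ σ' hσ π π' hπ hπισ hπadj B' hB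
end

section
/- Let n ≥ 1 and η > 0. Let S : ℝ × [−η,η] → M(2n,ℝ), (λ,t) ↦ S_λ(t), be a C¹ family of symmetric matrices, and let Ψ : ℝ × [−η,η] → M(2n,ℝ), (λ,t) ↦ Ψ_λ(t), be a C¹ family of matrices satisfying J·Ψ_λ′(t) + S_λ(t)·Ψ_λ(t) = 0 for all (λ,t) (where ′ is the derivative in t) and Ψ_λ(−η) = I for all λ. Then for every λ the matrix identity ∫_{−η}^{η} Ψ_λ(t)ᵀ·(∂_λS)_λ(t)·Ψ_λ(t) dt = − Ψ_λ(η)ᵀ·J·(∂_λΨ)_λ(η) holds, where ∂_λ denotes the partial derivative with respect to λ and the integral of a matrix-valued function is taken entrywise. -/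
/-!
For fixed `λ` and any `μ`, Jᵀ = −J and the symmetry of `S_λ` turn the two equations
`J Ψ_λ' = −S_λ Ψ_λ`, `J Ψ_μ' = −S_μ Ψ_μ` into
`(Ψ_λᵀ J Ψ_μ)' = Ψ_λᵀ (S_λ − S_μ) Ψ_μ`, so
`∫_{−η}^{η} Ψ_λᵀ (S_λ − S_μ) Ψ_μ = Ψ_λ(η)ᵀ J Ψ_μ(η) − J`.
Differentiating both sides in `μ` at `μ = λ` (under the integral sign) gives the identity: the
term carrying `∂_μ Ψ_μ` on the left is multiplied by `S_λ − S_μ`, which vanishes at `μ = λ`.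
-/

open Matrix Set Metric MeasureTheory

section Calculus

variable {E : Type*} [NormedAddCommGroup E] [NormedSpace ℝ E]

theorem ContDiff.continuous_of_hasDerivAt_fst {f : ℝ × ℝ → E} (hf : ContDiff ℝ 1 f)
    {g : ℝ → ℝ → E} (hg : ∀ x y, HasDerivAt (fun s => f (s, y)) (g x y) x) :
    Continuous fun p : ℝ × ℝ => g p.1 p.2 := by
  have hg_eq : ∀ p : ℝ × ℝ, g p.1 p.2 = fderiv ℝ f p (1, 0) := fun p =>
    (hg p.1 p.2).unique <| (hf.differentiable one_ne_zero p).hasFDerivAt.comp_hasDerivAt p.1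
      ((hasDerivAt_id p.1).prodMk (hasDerivAt_const p.1 p.2))
  simp only [hg_eq]
  exact (hf.continuous_fderiv one_ne_zero).clm_apply continuous_const

theorem intervalIntegral.hasDerivAt_integral_of_continuous {F F' : ℝ → ℝ → E}
    (hF : Continuous fun p : ℝ × ℝ => F p.1 p.2) (hF' : Continuous fun p : ℝ × ℝ => F' p.1 p.2)
    (hderiv : ∀ x t, HasDerivAt (fun x => F x t) (F' x t) x) (a b x₀ : ℝ) :
    HasDerivAt (fun x => ∫ t in a..b, F x t) (∫ t in a..b, F' x₀ t) x₀ := by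
  have hslice : ∀ {G : ℝ → ℝ → E}, (Continuous fun p : ℝ × ℝ => G p.1 p.2) →
      ∀ x, Continuous (G x) := fun hG x => hG.comp (continuous_const.prodMk continuous_id)
  obtain ⟨C, hC⟩ := ((isCompact_closedBall x₀ 1).prod isCompact_uIcc).exists_bound_of_continuousOn
    (hF'.continuousOn (s := closedBall x₀ 1 ×ˢ uIcc a b))
  exact (intervalIntegral.hasDerivAt_integral_of_dominated_loc_of_deriv_le (bound := fun _ => C)
    (ball_mem_nhds x₀ one_pos) (.of_forall fun x => (hslice hF x).aestronglyMeasurable)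
    ((hslice hF x₀).intervalIntegrable _ _) (hslice hF' x₀).aestronglyMeasurable
    (.of_forall fun t ht x hx => hC (x, t) ⟨ball_subset_closedBall hx, uIoc_subset_uIcc ht⟩)
    intervalIntegrable_const (.of_forall fun t _ x _ => hderiv x t)).2

end Calculus

theorem Matrix.hasDerivAt_mul_apply {l m n : Type*} [Fintype m] {A : ℝ → Matrix l m ℝ}
    {B : ℝ → Matrix m n ℝ} {A' : Matrix l m ℝ} {B' : Matrix m n ℝ} {x : ℝ}
    (hA : ∀ i j, HasDerivAt (fun s => A s i j) (A' i j) x)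
    (hB : ∀ i j, HasDerivAt (fun s => B s i j) (B' i j) x) (i : l) (j : n) :
    HasDerivAt (fun s => (A s * B s) i j) ((A' * B x + A x * B') i j) x := by
  simp only [mul_apply, add_apply, ← Finset.sum_add_distrib]
  exact HasDerivAt.fun_sum fun k _ => (hA i k).mul (hB k j)

theorem Matrix.integral_transpose_mul_sub_mul_eq {ι κ μ : Type*} [Fintype ι] {J : Matrix ι ι ℝ}
    (hJ : Jᵀ = -J) {a b : ℝ} {Φ Φ' : ℝ → Matrix ι κ ℝ} {Ψ Ψ' : ℝ → Matrix ι μ ℝ}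
    {S T : ℝ → Matrix ι ι ℝ}
    (hΦ : ∀ t ∈ uIcc a b, ∀ i j, HasDerivAt (fun s => Φ s i j) (Φ' t i j) t)
    (hΨ : ∀ t ∈ uIcc a b, ∀ i j, HasDerivAt (fun s => Ψ s i j) (Ψ' t i j) t)
    (hΦode : ∀ t ∈ uIcc a b, J * Φ' t + S t * Φ t = 0)
    (hΨode : ∀ t ∈ uIcc a b, J * Ψ' t + T t * Ψ t = 0)
    (hS : ∀ t ∈ uIcc a b, (S t)ᵀ = S t)
    (hcont : ContinuousOn (fun t => (Φ t)ᵀ * (S t - T t) * Ψ t) (uIcc a b)) (i : κ) (j : μ) :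
    ∫ t in a..b, ((Φ t)ᵀ * (S t - T t) * Ψ t) i j =
      ((Φ b)ᵀ * J * Ψ b) i j - ((Φ a)ᵀ * J * Ψ a) i j := by
  have hderiv : ∀ t ∈ uIcc a b,
      (Φ' t)ᵀ * J * Ψ t + (Φ t)ᵀ * J * Ψ' t = (Φ t)ᵀ * (S t - T t) * Ψ t := by
    intro t ht
    have hΦ'J : (Φ' t)ᵀ * J = (Φ t)ᵀ * S t := neg_add_eq_zero.mp <| by
      simpa [transpose_mul, hJ, hS t ht] using congrArg transpose (hΦode t ht)
    have hJΨ' : J * Ψ' t = -(T t * Ψ t) := eq_neg_of_add_eq_zero_left (hΨode t ht)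
    rw [hΦ'J, Matrix.mul_assoc _ J, hJΨ', Matrix.mul_neg, Matrix.mul_sub, Matrix.sub_mul,
      Matrix.mul_assoc _ (T t), sub_eq_add_neg]
  have hint : IntervalIntegrable (fun t => ((Φ t)ᵀ * (S t - T t) * Ψ t) i j) volume a b :=
    ((continuous_apply_apply i j).comp_continuousOn hcont).intervalIntegrable
  refine intervalIntegral.integral_eq_sub_of_hasDerivAt
    (f := fun t => ((Φ t)ᵀ * J * Ψ t) i j) (fun t ht => ?_) hint
  have hΦJ := hasDerivAt_mul_apply (A := fun s => (Φ s)ᵀ) (A' := (Φ' t)ᵀ) (B := fun _ => J)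
    (B' := 0) (fun i j => hΦ t ht j i) (fun i j => hasDerivAt_const t (J i j))
  simpa [← hderiv t ht] using hasDerivAt_mul_apply hΦJ (hΨ t ht) i j

theorem stmt13_general (n : ℕ) (η : ℝ) (hη : 0 < η)
    (S Ψ Ψt Ψl Sl : ℝ → ℝ → Matrix (Fin n ⊕ Fin n) (Fin n ⊕ Fin n) ℝ)
    (hSC1 : ∀ i j, ContDiff ℝ 1 fun p : ℝ × ℝ => S p.1 p.2 i j)
    (hΨC1 : ∀ i j, ContDiff ℝ 1 fun p : ℝ × ℝ => Ψ p.1 p.2 i j)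
    (hSsym : ∀ l t, (S l t)ᵀ = S l t)
    (hΨt : ∀ l t i j, HasDerivAt (fun s => Ψ l s i j) (Ψt l t i j) t)
    (hODE : ∀ l, ∀ t ∈ Icc (-η) η,
      (Matrix.fromBlocks (0 : Matrix (Fin n) (Fin n) ℝ) (-1) 1 0) * Ψt l t +
        S l t * Ψ l t = 0)
    (hinit : ∀ l, Ψ l (-η) = 1)
    (hΨl : ∀ l t i j, HasDerivAt (fun m => Ψ m t i j) (Ψl l t i j) l)
    (hSl : ∀ l t i j, HasDerivAt (fun m => S m t i j) (Sl l t i j) l) :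
    ∀ (l : ℝ) (i j : Fin n ⊕ Fin n),
      ∫ t in (-η)..η,
          ((Ψ l t)ᵀ * Sl l t * Ψ l t : Matrix (Fin n ⊕ Fin n) (Fin n ⊕ Fin n) ℝ) i j =
        (-((Ψ l η)ᵀ * (Matrix.fromBlocks (0 : Matrix (Fin n) (Fin n) ℝ) (-1) 1 0) * Ψl l η) :
          Matrix (Fin n ⊕ Fin n) (Fin n ⊕ Fin n) ℝ) i j := by
  intro l i j
  set J : Matrix (Fin n ⊕ Fin n) (Fin n ⊕ Fin n) ℝ := fromBlocks 0 (-1) 1 0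
  have hJ : Jᵀ = -J := J_transpose (Fin n) ℝ
  have hIcc : uIcc (-η) η = Icc (-η) η := uIcc_of_le (by linarith)
  have cS : Continuous fun p : ℝ × ℝ => S p.1 p.2 :=
    continuous_matrix fun i j => (hSC1 i j).continuous
  have cΨ : Continuous fun p : ℝ × ℝ => Ψ p.1 p.2 :=
    continuous_matrix fun i j => (hΨC1 i j).continuous
  have cSl : Continuous fun p : ℝ × ℝ => Sl p.1 p.2 :=
    continuous_matrix fun i j => (hSC1 i j).continuous_of_hasDerivAt_fst fun x y => hSl x y i j
  have cΨl : Continuous fun p : ℝ × ℝ => Ψl p.1 p.2 :=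
    continuous_matrix fun i j => (hΨC1 i j).continuous_of_hasDerivAt_fst fun x y => hΨl x y i j
  have wronskian : ∀ m, ∫ t in (-η)..η, ((Ψ l t)ᵀ * (S l t - S m t) * Ψ m t) i j =
      ((Ψ l η)ᵀ * J * Ψ m η) i j - J i j := fun m => by
    rw [integral_transpose_mul_sub_mul_eq hJ (fun t _ => hΨt l t) (fun t _ => hΨt m t)
      (fun t ht => hODE l t (hIcc ▸ ht)) (fun t ht => hODE m t (hIcc ▸ ht))
      (fun t _ => hSsym l t) (by fun_prop), hinit, hinit]
    simp
  have hF : ∀ m t, HasDerivAt (fun m => ((Ψ l t)ᵀ * (S l t - S m t) * Ψ m t) i j)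
      (((Ψ l t)ᵀ * -Sl m t * Ψ m t + (Ψ l t)ᵀ * (S l t - S m t) * Ψl m t) i j) m := by
    intro m t
    have hSdiff : ∀ i j, HasDerivAt (fun m => (S l t - S m t) i j) (-Sl m t i j) m :=
      fun i j => by simpa using (hSl m t i j).const_sub (S l t i j)
    simpa using hasDerivAt_mul_apply
      (hasDerivAt_mul_apply (A' := 0) (B' := -Sl m t)
        (fun i j => hasDerivAt_const m ((Ψ l t)ᵀ i j)) hSdiff)
      (hΨl m t) i j
  have leibniz := intervalIntegral.hasDerivAt_integral_of_continuous (by fun_prop) (by fun_prop)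
    hF (-η) η l
  have rhs : HasDerivAt (fun m => ((Ψ l η)ᵀ * J * Ψ m η) i j - J i j)
      (((Ψ l η)ᵀ * J * Ψl l η) i j) l := by
    simpa using (hasDerivAt_mul_apply (A' := 0)
      (fun i j => hasDerivAt_const l (((Ψ l η)ᵀ * J) i j))
      (hΨl l η) i j).sub_const (J i j)
  simp only [wronskian] at leibniz
  simpa [intervalIntegral.integral_neg, neg_eq_iff_eq_neg] using leibniz.unique rhs

/-- Let `S` be a `C¹` two-parameter family of symmetric matrices and `Ψ` a
`C¹` two-parameter family with `J·Ψ_λ′(t) + S_λ(t)·Ψ_λ(t) = 0` on `[−η,η]` and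
`Ψ_λ(−η) = I`. Then for every `λ`,
`∫_{−η}^{η} Ψ_λ(t)ᵀ·(∂_λS)_λ(t)·Ψ_λ(t) dt = −Ψ_λ(η)ᵀ·J·(∂_λΨ)_λ(η)` (entrywise integral). -/
theorem stmt13 (n : ℕ) (hn : 1 ≤ n) (η : ℝ) (hη : 0 < η)
    (S Ψ Ψt Ψl Sl : ℝ → ℝ → Matrix (Fin n ⊕ Fin n) (Fin n ⊕ Fin n) ℝ)
    (hSC1 : ∀ i j, ContDiff ℝ 1 fun p : ℝ × ℝ => S p.1 p.2 i j)
    (hΨC1 : ∀ i j, ContDiff ℝ 1 fun p : ℝ × ℝ => Ψ p.1 p.2 i j)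
    (hSsym : ∀ l t, (S l t)ᵀ = S l t)
    (hΨt : ∀ l t i j, HasDerivAt (fun s => Ψ l s i j) (Ψt l t i j) t)
    (hODE : ∀ l, ∀ t ∈ Icc (-η) η,
      (Matrix.fromBlocks (0 : Matrix (Fin n) (Fin n) ℝ) (-1) 1 0) * Ψt l t +
        S l t * Ψ l t = 0)
    (hinit : ∀ l, Ψ l (-η) = 1)
    (hΨl : ∀ l t i j, HasDerivAt (fun m => Ψ m t i j) (Ψl l t i j) l)
    (hSl : ∀ l t i j, HasDerivAt (fun m => S m t i j) (Sl l t i j) l) :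
    ∀ (l : ℝ) (i j : Fin n ⊕ Fin n),
      ∫ t in (-η)..η,
          ((Ψ l t)ᵀ * Sl l t * Ψ l t : Matrix (Fin n ⊕ Fin n) (Fin n ⊕ Fin n) ℝ) i j =
        (-((Ψ l η)ᵀ * (Matrix.fromBlocks (0 : Matrix (Fin n) (Fin n) ℝ) (-1) 1 0) * Ψl l η) :
          Matrix (Fin n ⊕ Fin n) (Fin n ⊕ Fin n) ℝ) i j :=
  stmt13_general n η hη S Ψ Ψt Ψl Sl hSC1 hΨC1 hSsym hΨt hODE hinit hΨl hSl
end

section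
/- Let n ≥ 1 and η > 0. Let S : ℝ × [−η,η] → M(2n,ℝ), (λ,t) ↦ S_λ(t), be a C¹ family of symmetric matrices, and let Ψ : ℝ × [−η,η] → M(2n,ℝ), (λ,t) ↦ Ψ_λ(t), be a C¹ family of matrices satisfying J·Ψ_λ′(t) + S_λ(t)·Ψ_λ(t) = 0 for all (λ,t) and Ψ_λ(−η) = I for all λ. Write Ψ_λ(η) in n×n block form Ψ_λ(η) = [[a_λ, b_λ],[c_λ, d_λ]]. Fix λ₀ ∈ ℝ and v ∈ ℝⁿ with b_{λ₀}·v = 0, and set u(t) := Ψ_{λ₀}(t)·(0,v) for t ∈ [−η,η]. Then ∫_{−η}^{η} ⟨(∂_λS)_{λ₀}(t)·u(t), u(t)⟩ dt = − ⟨d_{λ₀}·v, (∂_λ b)_{λ₀}·v⟩, where ∂_λ denotes the partial derivative with respect to λ evaluated at λ₀. -/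
/-!
Write `u = Ψ_{λ₀} e` with `e = (0, v)` and let `W = (∂_λΨ)_{λ₀}`. Differentiating the equation
`Ψ' = J S Ψ` in `λ` gives `W' = J (∂_λS · Ψ + S W)` with `W(−η) = 0`. Since `J² = −1`, `Jᵀ = −J`
and `S` is symmetric, `t ↦ ⟨J W(t) e, Ψ_{λ₀}(t) e⟩` has derivative `−⟨∂_λS u, u⟩`, so the integral
equals `−⟨J W(η) e, Ψ_{λ₀}(η) e⟩`. At `t = η` the upper-right block of `W` is `∂_λ b`, and
`b_{λ₀} v = 0` reduces the boundary term to `⟨d_{λ₀} v, (∂_λ b) v⟩`.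
-/

open Matrix Set

namespace ContDiff

variable {f : ℝ × ℝ → ℝ}

theorem hasDerivAt_fst (hf : ContDiff ℝ 1 f) (x t : ℝ) :
    HasDerivAt (fun y => f (y, t)) (fderiv ℝ f (x, t) (1, 0)) x :=
  ((hf.differentiable one_ne_zero (x, t)).hasFDerivAt).comp_hasDerivAt x
    ((hasDerivAt_id x).prodMk (hasDerivAt_const x t))

theorem continuous_fderiv_apply_fst (hf : ContDiff ℝ 1 f) :
    Continuous fun p => fderiv ℝ f p (1, 0) :=
  (hf.continuous_fderiv one_ne_zero).clm_apply continuous_const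

theorem continuous_of_hasDerivAt_fst_s14 (hf : ContDiff ℝ 1 f) {g : ℝ → ℝ} {x : ℝ}
    (hg : ∀ t, HasDerivAt (fun y => f (y, t)) (g t) x) : Continuous g := by
  have hg_eq : g = fun t => fderiv ℝ f (x, t) (1, 0) :=
    funext fun t => (hg t).unique (hf.hasDerivAt_fst x t)
  exact hg_eq ▸ hf.continuous_fderiv_apply_fst.comp (continuous_const.prodMk continuous_id)

theorem hasDerivAt_intervalIntegral_fst (hf : ContDiff ℝ 1 f) (a b x₀ : ℝ) :
    HasDerivAt (fun x => ∫ s in a..b, f (x, s)) (∫ s in a..b, fderiv ℝ f (x₀, s) (1, 0)) x₀ := by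
  have hcont : ∀ x, Continuous fun s => f (x, s) := fun x =>
    hf.continuous.comp (continuous_const.prodMk continuous_id)
  obtain ⟨C, hC⟩ : ∃ C, ∀ p ∈ Metric.closedBall x₀ 1 ×ˢ uIcc a b, ‖fderiv ℝ f p (1, 0)‖ ≤ C :=
    ((isCompact_closedBall x₀ 1).prod isCompact_uIcc).exists_bound_of_continuousOn
      hf.continuous_fderiv_apply_fst.continuousOn
  exact (intervalIntegral.hasDerivAt_integral_of_dominated_loc_of_deriv_le
    (bound := fun _ => C) (Metric.ball_mem_nhds x₀ one_pos)
    (Filter.Eventually.of_forall fun x => (hcont x).aestronglyMeasurable)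
    ((hcont x₀).intervalIntegrable _ _)
    ((hf.continuous_fderiv_apply_fst.comp
      (continuous_const.prodMk continuous_id)).aestronglyMeasurable)
    (MeasureTheory.ae_of_all _ fun s hs x hx =>
      hC (x, s) ⟨Metric.ball_subset_closedBall hx, uIoc_subset_uIcc hs⟩)
    intervalIntegrable_const
    (MeasureTheory.ae_of_all _ fun s _ x _ => hf.hasDerivAt_fst x s)).2

end ContDiff

theorem hasDerivAt_param_of_hasDerivAt_eq {g : ℝ → ℝ → ℝ} {G : ℝ × ℝ → ℝ}
    (hG : ContDiff ℝ 1 G) {a b t l₀ : ℝ} (hg : ∀ l, ∀ s ∈ Icc a b, HasDerivAt (g l) (G (l, s)) s)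
    (hinit : ∀ l, g l a = g l₀ a) (ht : t ∈ Icc a b) :
    HasDerivAt (fun l => g l t) (∫ s in a..t, fderiv ℝ G (l₀, s) (1, 0)) l₀ := by
  have hrep : ∀ l, g l t = g l₀ a + ∫ s in a..t, G (l, s) := by
    intro l
    rw [intervalIntegral.integral_eq_sub_of_hasDerivAt (f := g l), hinit l, add_sub_cancel]
    · intro s hs
      rw [uIcc_of_le ht.1] at hs
      exact hg l s ⟨hs.1, hs.2.trans ht.2⟩
    · exact (hG.continuous.comp (continuous_const.prodMk continuous_id)).intervalIntegrable _ _
  simp_rw [hrep]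
  exact (hG.hasDerivAt_intervalIntegral_fst a t l₀).const_add _

section EntrywiseDeriv

variable {k l m n : Type*}

/-- Matrices carry no canonical norm in Mathlib, so derivatives of matrix-valued functions are
taken entrywise. -/
def HasEntrywiseDerivAt (A : ℝ → Matrix m n ℝ) (A' : Matrix m n ℝ) (t : ℝ) : Prop :=
  ∀ i j, HasDerivAt (fun s => A s i j) (A' i j) t

namespace HasEntrywiseDerivAt

variable {A : ℝ → Matrix m n ℝ} {A' : Matrix m n ℝ} {t : ℝ}

theorem const_mul [Fintype m] (C : Matrix l m ℝ) (hA : HasEntrywiseDerivAt A A' t) :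
    HasEntrywiseDerivAt (fun s => C * A s) (C * A') t := by
  intro i j
  simp only [mul_apply]
  exact HasDerivAt.fun_sum fun k _ => (hA k j).const_mul (C i k)

theorem mul [Fintype n] {B : ℝ → Matrix n k ℝ} {B' : Matrix n k ℝ}
    (hA : HasEntrywiseDerivAt A A' t) (hB : HasEntrywiseDerivAt B B' t) :
    HasEntrywiseDerivAt (fun s => A s * B s) (A' * B t + A t * B') t := by
  intro i j
  simp only [Matrix.add_apply, mul_apply]
  rw [← Finset.sum_add_distrib]
  exact HasDerivAt.fun_sum fun k _ => (hA i k).mul (hB k j)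

theorem mulVec_dotProduct_mulVec [Fintype m] [Fintype n] {B : ℝ → Matrix m k ℝ}
    {B' : Matrix m k ℝ} [Fintype k] (hA : HasEntrywiseDerivAt A A' t)
    (hB : HasEntrywiseDerivAt B B' t) (x : n → ℝ) (y : k → ℝ) :
    HasDerivAt (fun s => A s *ᵥ x ⬝ᵥ B s *ᵥ y) (A' *ᵥ x ⬝ᵥ B t *ᵥ y + A t *ᵥ x ⬝ᵥ B' *ᵥ y) t := by
  simp only [mulVec, dotProduct, ← Finset.sum_add_distrib]
  exact HasDerivAt.fun_sum fun i _ =>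
    (HasDerivAt.fun_sum fun j _ => (hA i j).mul_const (x j)).mul
      (HasDerivAt.fun_sum fun j _ => (hB i j).mul_const (y j))

end HasEntrywiseDerivAt

/-- `∂ₜ ∂_λ Ψ = ∂_λ ∂ₜ Ψ` for a solution of `∂ₜΨ = F`, without assuming `Ψ` to be `C²`: the
`λ`-derivative is obtained by differentiating `Ψ(λ, t) = Ψ(λ, a) + ∫ₐᵗ F(λ, s) ds` under the
integral sign. -/
theorem exists_hasEntrywiseDerivAt_param {Ψ F : ℝ → ℝ → Matrix m n ℝ} {a b l₀ : ℝ}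
    (hF : ∀ i j, ContDiff ℝ 1 fun p : ℝ × ℝ => F p.1 p.2 i j)
    (hΨ : ∀ l, ∀ t ∈ Icc a b, HasEntrywiseDerivAt (Ψ l) (F l t) t)
    (hinit : ∀ l, Ψ l a = Ψ l₀ a) :
    ∃ W : ℝ → Matrix m n ℝ, W a = 0 ∧
      (∀ t ∈ Icc a b, HasEntrywiseDerivAt (fun l => Ψ l t) (W t) l₀) ∧
      ∀ t F', HasEntrywiseDerivAt (fun l => F l t) F' l₀ → HasEntrywiseDerivAt W F' t := by
  refine ⟨fun t i j => ∫ s in a..t, fderiv ℝ (fun p : ℝ × ℝ => F p.1 p.2 i j) (l₀, s) (1, 0),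
    ?_, ?_, ?_⟩
  · ext i j
    exact intervalIntegral.integral_same
  · intro t ht i j
    exact hasDerivAt_param_of_hasDerivAt_eq (hF i j) (fun l s hs => hΨ l s hs i j)
      (fun l => by rw [hinit]) ht
  · intro t F' hF' i j
    rw [(hF' i j).unique ((hF i j).hasDerivAt_fst l₀ t)]
    exact (((hF i j).continuous_fderiv_apply_fst.comp
      (continuous_const.prodMk continuous_id)).integral_hasStrictDerivAt a t).hasDerivAt

end EntrywiseDeriv

section Variation

variable {R N : Type*} [CommRing R] [Fintype N] [DecidableEq N]

theorem eq_mul_of_mul_add_eq_zero {J X Y : Matrix N N R} (hJJ : J * J = -1)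
    (h : J * X + Y = 0) : X = J * Y := by
  rw [← neg_neg Y, ← eq_neg_of_add_eq_zero_left h, Matrix.mul_neg, ← Matrix.mul_assoc, hJJ,
    neg_one_mul, neg_neg]

theorem J_variation_identity {J S : Matrix N N R} (hJJ : J * J = -1) (hJT : Jᵀ = -J)
    (hS : Sᵀ = S) (S' P W : Matrix N N R) (e : N → R) :
    (J * (J * (S' * P + S * W))) *ᵥ e ⬝ᵥ P *ᵥ e + (J * W) *ᵥ e ⬝ᵥ (J * (S * P)) *ᵥ e =
      -(S' *ᵥ (P *ᵥ e) ⬝ᵥ P *ᵥ e) := by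
  have hJ_isometry : ∀ x y : N → R, J *ᵥ x ⬝ᵥ J *ᵥ y = x ⬝ᵥ y := fun x y => by
    rw [dotProduct_mulVec, ← mulVec_transpose, mulVec_mulVec, hJT, Matrix.neg_mul, hJJ, neg_neg,
      one_mulVec]
  have hS_self_adjoint : ∀ x y : N → R, x ⬝ᵥ S *ᵥ y = S *ᵥ x ⬝ᵥ y := fun x y => by
    rw [dotProduct_mulVec, ← mulVec_transpose, hS]
  have hJJX : J * (J * (S' * P + S * W)) = -(S' * P + S * W) := by
    rw [← Matrix.mul_assoc, hJJ, neg_one_mul]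
  rw [hJJX, ← mulVec_mulVec e J W, ← mulVec_mulVec e J, hJ_isometry, ← mulVec_mulVec e S P,
    hS_self_adjoint, neg_mulVec, add_mulVec, neg_dotProduct, add_dotProduct, mulVec_mulVec,
    ← mulVec_mulVec e S' P]
  ring

theorem integral_dotProduct_eq_sub_of_variation {J : Matrix N N ℝ} (hJJ : J * J = -1)
    (hJT : Jᵀ = -J) {S S' P W : ℝ → Matrix N N ℝ} {a b : ℝ} (hab : a ≤ b)
    (hS : ∀ t, (S t)ᵀ = S t) (hS' : Continuous S') (hPc : Continuous P)
    (hP : ∀ t ∈ Icc a b, HasEntrywiseDerivAt P (J * (S t * P t)) t)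
    (hW : ∀ t ∈ Icc a b, HasEntrywiseDerivAt W (J * (S' t * P t + S t * W t)) t) (e : N → ℝ) :
    ∫ t in a..b, S' t *ᵥ (P t *ᵥ e) ⬝ᵥ P t *ᵥ e =
      (J * W a) *ᵥ e ⬝ᵥ P a *ᵥ e - (J * W b) *ᵥ e ⬝ᵥ P b *ᵥ e := by
  have hderiv : ∀ t ∈ uIcc a b, HasDerivAt (fun s => (J * W s) *ᵥ e ⬝ᵥ P s *ᵥ e)
      (-(S' t *ᵥ (P t *ᵥ e) ⬝ᵥ P t *ᵥ e)) t := by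
    intro t ht
    rw [uIcc_of_le hab] at ht
    have h := ((hW t ht).const_mul J).mulVec_dotProduct_mulVec (hP t ht) e e
    rwa [J_variation_identity hJJ hJT (hS t)] at h
  have hint : Continuous fun t => S' t *ᵥ (P t *ᵥ e) ⬝ᵥ P t *ᵥ e := by fun_prop
  have hFTC := intervalIntegral.integral_eq_sub_of_hasDerivAt hderiv
    (hint.neg.intervalIntegrable a b)
  rw [intervalIntegral.integral_neg] at hFTC
  linarith

end Variation

theorem J_mul_mulVec_inr_dotProduct_fromBlocks_mulVec_inr {R n : Type*} [CommRing R] [Fintype n]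
    [DecidableEq n] (W : Matrix (n ⊕ n) (n ⊕ n) R) (A B C D : Matrix n n R) {v : n → R}
    (hv : B *ᵥ v = 0) :
    (J n R * W) *ᵥ Sum.elim 0 v ⬝ᵥ fromBlocks A B C D *ᵥ Sum.elim 0 v =
      D *ᵥ v ⬝ᵥ W.toBlocks₁₂ *ᵥ v := by
  rw [← fromBlocks_toBlocks W, J, fromBlocks_multiply, fromBlocks_mulVec, fromBlocks_mulVec,
    sumElim_dotProduct_sumElim]
  simp [hv, dotProduct_comm]

theorem stmt14_general (n : ℕ) (η : ℝ) (hη : 0 < η) (l₀ : ℝ)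
    (S Ψ Ψt : ℝ → ℝ → Matrix (Fin n ⊕ Fin n) (Fin n ⊕ Fin n) ℝ)
    (hSC1 : ∀ i j, ContDiff ℝ 1 fun p : ℝ × ℝ => S p.1 p.2 i j)
    (hΨC1 : ∀ i j, ContDiff ℝ 1 fun p : ℝ × ℝ => Ψ p.1 p.2 i j)
    (hSsym : ∀ l t, (S l t)ᵀ = S l t)
    (hΨt : ∀ l t i j, HasDerivAt (fun s => Ψ l s i j) (Ψt l t i j) t)
    (hODE : ∀ l, ∀ t ∈ Icc (-η) η,
      (Matrix.fromBlocks (0 : Matrix (Fin n) (Fin n) ℝ) (-1) 1 0) * Ψt l t +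
        S l t * Ψ l t = 0)
    (hinit : ∀ l, Ψ l (-η) = 1)
    (a b c d : ℝ → Matrix (Fin n) (Fin n) ℝ)
    (hblocks : ∀ l, Ψ l η = Matrix.fromBlocks (a l) (b l) (c l) (d l))
    (Sl : ℝ → Matrix (Fin n ⊕ Fin n) (Fin n ⊕ Fin n) ℝ)
    (hSl : ∀ t i j, HasDerivAt (fun m => S m t i j) (Sl t i j) l₀)
    (bl : Matrix (Fin n) (Fin n) ℝ)
    (hbl : ∀ i j, HasDerivAt (fun l => b l i j) (bl i j) l₀)
    (v : Fin n → ℝ) (hv : (b l₀).mulVec v = 0) :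
    ∫ t in (-η)..η,
        (Sl t).mulVec ((Ψ l₀ t).mulVec (Sum.elim 0 v)) ⬝ᵥ (Ψ l₀ t).mulVec (Sum.elim 0 v) =
      -((d l₀).mulVec v ⬝ᵥ bl.mulVec v) := by
  have hΨ : ∀ l, ∀ t ∈ Icc (-η) η,
      HasEntrywiseDerivAt (Ψ l) (J (Fin n) ℝ * (S l t * Ψ l t)) t := fun l t ht =>
    eq_mul_of_mul_add_eq_zero (J_squared _ _) (hODE l t ht) ▸ hΨt l t
  have hF : ∀ i j, ContDiff ℝ 1 fun p : ℝ × ℝ => (J (Fin n) ℝ * (S p.1 p.2 * Ψ p.1 p.2)) i j := by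
    intro i j
    simp only [mul_apply]
    fun_prop
  obtain ⟨W, hW₀, hΨW, hW⟩ := exists_hasEntrywiseDerivAt_param hF hΨ fun l => by rw [hinit, hinit]
  have hWode : ∀ t ∈ Icc (-η) η,
      HasEntrywiseDerivAt W (J (Fin n) ℝ * (Sl t * Ψ l₀ t + S l₀ t * W t)) t := fun t ht =>
    hW t _ ((HasEntrywiseDerivAt.mul (hSl t) (hΨW t ht)).const_mul _)
  have hWbl : (W η).toBlocks₁₂ = bl := by
    ext i j
    refine (hΨW η ⟨by linarith, le_rfl⟩ (Sum.inl i) (Sum.inr j)).unique ?_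
    simpa only [hblocks, fromBlocks_apply₁₂] using hbl i j
  have hSlc : Continuous Sl := continuous_matrix fun i j =>
    (hSC1 i j).continuous_of_hasDerivAt_fst_s14 fun t => hSl t i j
  have hΨc : Continuous (Ψ l₀) := continuous_matrix fun i j =>
    (hΨC1 i j).continuous.comp (continuous_const.prodMk continuous_id)
  rw [integral_dotProduct_eq_sub_of_variation (J_squared _ _) (J_transpose _ _) (by linarith)
    (hSsym l₀) hSlc hΨc (hΨ l₀) hWode, hW₀, hblocks,
    J_mul_mulVec_inr_dotProduct_fromBlocks_mulVec_inr _ _ _ _ _ hv, hWbl]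
  simp

/-- With `S`, `Ψ` as in Statement 13 (`C¹` families, `J·Ψ′ + S·Ψ = 0` on
`[−η,η]`, `Ψ_λ(−η) = I`), write `Ψ_λ(η) = [[a_λ,b_λ],[c_λ,d_λ]]`. If `b_{λ₀}·v = 0` and
`u(t) := Ψ_{λ₀}(t)·(0,v)`, then
`∫_{−η}^{η} ⟨(∂_λS)_{λ₀}(t)·u(t), u(t)⟩ dt = −⟨d_{λ₀}·v, (∂_λb)_{λ₀}·v⟩`. -/
theorem stmt14 (n : ℕ) (hn : 1 ≤ n) (η : ℝ) (hη : 0 < η) (l₀ : ℝ)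
    (S Ψ Ψt : ℝ → ℝ → Matrix (Fin n ⊕ Fin n) (Fin n ⊕ Fin n) ℝ)
    (hSC1 : ∀ i j, ContDiff ℝ 1 fun p : ℝ × ℝ => S p.1 p.2 i j)
    (hΨC1 : ∀ i j, ContDiff ℝ 1 fun p : ℝ × ℝ => Ψ p.1 p.2 i j)
    (hSsym : ∀ l t, (S l t)ᵀ = S l t)
    (hΨt : ∀ l t i j, HasDerivAt (fun s => Ψ l s i j) (Ψt l t i j) t)
    (hODE : ∀ l, ∀ t ∈ Icc (-η) η,
      (Matrix.fromBlocks (0 : Matrix (Fin n) (Fin n) ℝ) (-1) 1 0) * Ψt l t +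
        S l t * Ψ l t = 0)
    (hinit : ∀ l, Ψ l (-η) = 1)
    (a b c d : ℝ → Matrix (Fin n) (Fin n) ℝ)
    (hblocks : ∀ l, Ψ l η = Matrix.fromBlocks (a l) (b l) (c l) (d l))
    (Sl : ℝ → Matrix (Fin n ⊕ Fin n) (Fin n ⊕ Fin n) ℝ)
    (hSl : ∀ t i j, HasDerivAt (fun m => S m t i j) (Sl t i j) l₀)
    (bl : Matrix (Fin n) (Fin n) ℝ)
    (hbl : ∀ i j, HasDerivAt (fun l => b l i j) (bl i j) l₀)
    (v : Fin n → ℝ) (hv : (b l₀).mulVec v = 0) :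
    ∫ t in (-η)..η,
        (Sl t).mulVec ((Ψ l₀ t).mulVec (Sum.elim 0 v)) ⬝ᵥ (Ψ l₀ t).mulVec (Sum.elim 0 v) =
      -((d l₀).mulVec v ⬝ᵥ bl.mulVec v) :=
  stmt14_general n η hη l₀ S Ψ Ψt hSC1 hΨC1 hSsym hΨt hODE hinit a b c d hblocks Sl hSl bl hbl v hv
end

section
/- Let E be a finite-dimensional real inner product space and let L₁, L₂ : E → E be symmetric linear maps (⟨Lx, y⟩ = ⟨x, Ly⟩ for all x, y). Assume L₁ is bijective and that the operator norm of L₂ satisfies ‖L₂‖ < ‖L₁⁻¹‖⁻¹. Then L₁ + L₂ is bijective, and moreover the dimension of the sum of the eigenspaces of L₁ + L₂ corresponding to positive eigenvalues equals the dimension of the sum of the eigenspaces of L₁ corresponding to positive eigenvalues, and likewise the dimensions of the sums of the eigenspaces corresponding to negative eigenvalues agree. In particular the signatures of the quadratic forms x ↦ ⟨L₁x, x⟩ and x ↦ ⟨(L₁+L₂)x, x⟩ coincide. -/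
open scoped RealInnerProductSpace

/-- The dimension of the sum of the eigenspaces of `L` for positive eigenvalues. -/
noncomputable def posEigDim {E : Type*} [NormedAddCommGroup E] [InnerProductSpace ℝ E]
    (L : E →L[ℝ] E) : ℕ :=
  Module.finrank ℝ
    ↥(⨆ μ : ℝ, ⨆ _ : 0 < μ, Module.End.eigenspace (L : E →ₗ[ℝ] E) μ)

/-- The dimension of the sum of the eigenspaces of `L` for negative eigenvalues. -/
noncomputable def negEigDim {E : Type*} [NormedAddCommGroup E] [InnerProductSpace ℝ E]
    (L : E →L[ℝ] E) : ℕ :=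
  Module.finrank ℝ
    ↥(⨆ μ : ℝ, ⨆ _ : μ < 0, Module.End.eigenspace (L : E →ₗ[ℝ] E) μ)

section Aux

open Module Submodule Finset

variable {E : Type*} [NormedAddCommGroup E] [InnerProductSpace ℝ E] [FiniteDimensional ℝ E]

/-- Coefficients vanish off the support set. -/
lemma aux_inner_eq_zero {ι : Type*} [Fintype ι] (b : OrthonormalBasis ι ℝ E)
    (s : Set ι) {i : ι} (hi : i ∉ s) {x : E} (hx : x ∈ span ℝ (b '' s)) :
    ⟪b i, x⟫ = 0 := by
  induction hx using Submodule.span_induction with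
  | mem y hy =>
    obtain ⟨j, hj, rfl⟩ := hy
    exact b.orthonormal.2 (fun h => hi (h ▸ hj))
  | zero => simp
  | add y z _ _ hy hz => rw [inner_add_right, hy, hz]; ring
  | smul a y _ hy => rw [real_inner_smul_right, hy]; ring

/-- Quadratic form formula for a map diagonal in an orthonormal basis. -/
lemma aux_qf {ι : Type*} [Fintype ι] (b : OrthonormalBasis ι ℝ E) (β : ι → ℝ)
    (T : E →L[ℝ] E) (hTb : ∀ i, T (b i) = β i • b i) (x : E) :
    ⟪T x, x⟫ = ∑ i, β i * ⟪b i, x⟫ ^ 2 := by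
  have hTx : T x = ∑ i, (β i * ⟪b i, x⟫) • b i := by
    conv_lhs => rw [← b.sum_repr' x]
    rw [map_sum]
    refine Finset.sum_congr rfl fun i _ => ?_
    rw [ContinuousLinearMap.map_smul, hTb i, smul_smul, mul_comm]
  rw [hTx, sum_inner]
  refine Finset.sum_congr rfl fun i _ => ?_
  rw [real_inner_smul_left]; ring

lemma aux_norm_sq {ι : Type*} [Fintype ι] (b : OrthonormalBasis ι ℝ E) (x : E) :
    ‖x‖ ^ 2 = ∑ i, ⟪b i, x⟫ ^ 2 := by
  have := aux_qf b (fun _ => 1) (ContinuousLinearMap.id ℝ E) (fun i => by simp) x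
  simpa [real_inner_self_eq_norm_sq] using this

/-- Span characterization of the supremum of eigenspaces over a predicate. -/
lemma aux_span_eig (T : E →L[ℝ] E) (hT : LinearMap.IsSymmetric (T : E →ₗ[ℝ] E))
    {n : ℕ} (hn : Module.finrank ℝ E = n) (p : ℝ → Prop) :
    (⨆ μ : ℝ, ⨆ _ : p μ, Module.End.eigenspace (T : E →ₗ[ℝ] E) μ)
      = span ℝ (hT.eigenvectorBasis hn '' {i | p (hT.eigenvalues hn i)}) := by
  set b := hT.eigenvectorBasis hn with hb
  set β := hT.eigenvalues hn with hβ
  apply le_antisymm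
  · refine iSup₂_le fun μ hμ x hx => ?_
    rw [Module.End.mem_eigenspace_iff] at hx
    rw [← b.sum_repr' x]
    refine Submodule.sum_mem _ fun i _ => ?_
    by_cases hc : ⟪b i, x⟫ = 0
    · rw [hc, zero_smul]; exact Submodule.zero_mem _
    · have hβμ : β i = μ := by
        have h1 : ⟪(T : E →ₗ[ℝ] E) (b i), x⟫ = ⟪b i, (T : E →ₗ[ℝ] E) x⟫ := hT (b i) x
        have h2 : (T : E →ₗ[ℝ] E) (b i) = β i • b i := hT.apply_eigenvectorBasis hn i
        have h3 : (T : E →ₗ[ℝ] E) x = μ • x := hx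
        rw [h2, h3, real_inner_smul_left, real_inner_smul_right] at h1
        exact mul_right_cancel₀ hc h1
      exact Submodule.smul_mem _ _ (Submodule.subset_span ⟨i, by simp [hβμ, hμ], rfl⟩)
  · rw [Submodule.span_le]
    rintro y ⟨i, hi, rfl⟩
    refine Submodule.mem_iSup_of_mem (β i) (Submodule.mem_iSup_of_mem hi ?_)
    rw [Module.End.mem_eigenspace_iff]
    exact hT.apply_eigenvectorBasis hn i

lemma aux_finrank_span {n : ℕ} (b : OrthonormalBasis (Fin n) ℝ E) (s : Finset (Fin n)) :
    finrank ℝ (span ℝ (b '' ↑s)) = s.card := by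
  rw [Set.image_eq_range]
  exact (finrank_span_eq_card
    (b.orthonormal.linearIndependent.comp Subtype.val Subtype.val_injective)).trans
    (Fintype.card_coe s)

lemma aux_eigDim (T : E →L[ℝ] E) (hT : LinearMap.IsSymmetric (T : E →ₗ[ℝ] E))
    {n : ℕ} (hn : Module.finrank ℝ E = n) (p : ℝ → Prop) [DecidablePred p] :
    finrank ℝ ↥(⨆ μ : ℝ, ⨆ _ : p μ, Module.End.eigenspace (T : E →ₗ[ℝ] E) μ)
      = (Finset.univ.filter fun i => p (hT.eigenvalues hn i)).card := by
  rw [aux_span_eig T hT hn p]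
  have : {i | p (hT.eigenvalues hn i)}
      = ↑(Finset.univ.filter fun i => p (hT.eigenvalues hn i)) := by
    ext i; simp
  rw [this, aux_finrank_span]

open Classical in
/-- A subspace on which the quadratic form is positive definite has dimension at most
the dimension of the sum of positive eigenspaces. -/
lemma aux_le_pos (T : E →L[ℝ] E) (hT : LinearMap.IsSymmetric (T : E →ₗ[ℝ] E))
    (W : Submodule ℝ E) (hW : ∀ x ∈ W, x ≠ 0 → 0 < ⟪T x, x⟫) :
    finrank ℝ W ≤ finrank ℝ ↥(⨆ μ : ℝ, ⨆ _ : 0 < μ, Module.End.eigenspace (T : E →ₗ[ℝ] E) μ) := by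
  set n := Module.finrank ℝ E with hndef
  have hn : Module.finrank ℝ E = n := rfl
  set b := hT.eigenvectorBasis hn with hb
  set β := hT.eigenvalues hn with hβ
  have hTb : ∀ i, T (b i) = β i • b i := fun i => hT.apply_eigenvectorBasis hn i
  set N : Submodule ℝ E := span ℝ (b '' {i | ¬ 0 < β i}) with hN
  have hdisj : W ⊓ N = ⊥ := by
    rw [eq_bot_iff]
    rintro x ⟨hxW, hxN⟩
    by_contra hx0
    rw [Submodule.mem_bot] at hx0
    have hpos : 0 < ⟪T x, x⟫ := hW x hxW hx0
    have hle : ⟪T x, x⟫ ≤ 0 := by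
      rw [aux_qf b β T hTb x]
      refine Finset.sum_nonpos fun i _ => ?_
      by_cases hi : 0 < β i
      · rw [aux_inner_eq_zero b _ (by simpa using hi) hxN]; simp
      · push_neg at hi
        exact mul_nonpos_of_nonpos_of_nonneg (by linarith) (sq_nonneg _)
    linarith
  have hNrank : finrank ℝ N = (Finset.univ.filter fun i => ¬ 0 < β i).card := by
    have : {i | ¬ 0 < β i} = ↑(Finset.univ.filter fun i => ¬ 0 < β i) := by ext i; simp
    rw [hN, this, aux_finrank_span]
  have hsup : finrank ℝ ↥(W ⊔ N) + finrank ℝ ↥(W ⊓ N) = finrank ℝ W + finrank ℝ N :=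
    Submodule.finrank_sup_add_finrank_inf_eq W N
  have hWN : finrank ℝ W + finrank ℝ N ≤ n := by
    rw [← hsup, hdisj, finrank_bot]
    simpa using Submodule.finrank_le (W ⊔ N)
  have hPdim : finrank ℝ ↥(⨆ μ : ℝ, ⨆ _ : 0 < μ, Module.End.eigenspace (T : E →ₗ[ℝ] E) μ)
      = (Finset.univ.filter fun i => 0 < β i).card := aux_eigDim T hT hn _
  have hpart : (Finset.univ.filter fun i => 0 < β i).card
      + (Finset.univ.filter fun i => ¬ 0 < β i).card = n := by
    rw [Finset.card_filter_add_card_filter_not]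
    simp
  omega

open Classical in
lemma aux_le_neg (T : E →L[ℝ] E) (hT : LinearMap.IsSymmetric (T : E →ₗ[ℝ] E))
    (W : Submodule ℝ E) (hW : ∀ x ∈ W, x ≠ 0 → ⟪T x, x⟫ < 0) :
    finrank ℝ W ≤ finrank ℝ ↥(⨆ μ : ℝ, ⨆ _ : μ < 0, Module.End.eigenspace (T : E →ₗ[ℝ] E) μ) := by
  set n := Module.finrank ℝ E with hndef
  have hn : Module.finrank ℝ E = n := rfl
  set b := hT.eigenvectorBasis hn with hb
  set β := hT.eigenvalues hn with hβ
  have hTb : ∀ i, T (b i) = β i • b i := fun i => hT.apply_eigenvectorBasis hn i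
  set N : Submodule ℝ E := span ℝ (b '' {i | ¬ β i < 0}) with hN
  have hdisj : W ⊓ N = ⊥ := by
    rw [eq_bot_iff]
    rintro x ⟨hxW, hxN⟩
    by_contra hx0
    rw [Submodule.mem_bot] at hx0
    have hneg : ⟪T x, x⟫ < 0 := hW x hxW hx0
    have hge : 0 ≤ ⟪T x, x⟫ := by
      rw [aux_qf b β T hTb x]
      refine Finset.sum_nonneg fun i _ => ?_
      by_cases hi : β i < 0
      · rw [aux_inner_eq_zero b _ (by simpa using hi) hxN]; simp
      · push_neg at hi
        exact mul_nonneg hi (sq_nonneg _)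
    linarith
  have hNrank : finrank ℝ N = (Finset.univ.filter fun i => ¬ β i < 0).card := by
    have : {i | ¬ β i < 0} = ↑(Finset.univ.filter fun i => ¬ β i < 0) := by ext i; simp
    rw [hN, this, aux_finrank_span]
  have hsup : finrank ℝ ↥(W ⊔ N) + finrank ℝ ↥(W ⊓ N) = finrank ℝ W + finrank ℝ N :=
    Submodule.finrank_sup_add_finrank_inf_eq W N
  have hWN : finrank ℝ W + finrank ℝ N ≤ n := by
    rw [← hsup, hdisj, finrank_bot]
    simpa using Submodule.finrank_le (W ⊔ N)
  have hPdim : finrank ℝ ↥(⨆ μ : ℝ, ⨆ _ : μ < 0, Module.End.eigenspace (T : E →ₗ[ℝ] E) μ)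
      = (Finset.univ.filter fun i => β i < 0).card := aux_eigDim T hT hn _
  have hpart : (Finset.univ.filter fun i => β i < 0).card
      + (Finset.univ.filter fun i => ¬ β i < 0).card = n := by
    rw [Finset.card_filter_add_card_filter_not]
    simp
  omega

open Classical in
/-- For an injective symmetric map, the positive and negative eigendimensions add up to
the dimension of the space. -/
lemma aux_sum_eq (T : E →L[ℝ] E) (hT : LinearMap.IsSymmetric (T : E →ₗ[ℝ] E))
    (hinj : Function.Injective T) :
    finrank ℝ ↥(⨆ μ : ℝ, ⨆ _ : 0 < μ, Module.End.eigenspace (T : E →ₗ[ℝ] E) μ)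
    + finrank ℝ ↥(⨆ μ : ℝ, ⨆ _ : μ < 0, Module.End.eigenspace (T : E →ₗ[ℝ] E) μ)
    = Module.finrank ℝ E := by
  set n := Module.finrank ℝ E with hndef
  have hn : Module.finrank ℝ E = n := rfl
  set b := hT.eigenvectorBasis hn with hb
  set β := hT.eigenvalues hn with hβ
  have hne : ∀ i, β i ≠ 0 := by
    intro i hi
    have h1 : T (b i) = β i • b i := hT.apply_eigenvectorBasis hn i
    rw [hi, zero_smul] at h1
    have : b i = 0 := hinj (by rw [h1, map_zero])
    have hb1 : ‖b i‖ = 1 := b.orthonormal.1 i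
    rw [this, norm_zero] at hb1
    norm_num at hb1
  rw [aux_eigDim T hT hn _, aux_eigDim T hT hn _]
  have hfe : (Finset.univ.filter fun i => β i < 0)
      = (Finset.univ.filter fun i => ¬ 0 < β i) := by
    apply Finset.filter_congr
    intro i _
    constructor
    · intro h; linarith
    · intro h; rcases lt_trichotomy (β i) 0 with h' | h' | h'
      · exact h'
      · exact absurd h' (hne i)
      · exact absurd h' h
  rw [hfe, Finset.card_filter_add_card_filter_not]
  simp

end Aux

/-- Let `E` be a finite-dimensional real inner product space, `L₁, L₂`
symmetric linear maps on `E` with `L₁` bijective (with inverse `M`) and `‖L₂‖ < ‖L₁⁻¹‖⁻¹`.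
Then `L₁ + L₂` is bijective, `m⁺(L₁ + L₂) = m⁺(L₁)`, `m⁻(L₁ + L₂) = m⁻(L₁)`, and in
particular the signatures of the associated quadratic forms coincide. -/
theorem stmt15 {E : Type*} [NormedAddCommGroup E] [InnerProductSpace ℝ E]
    [FiniteDimensional ℝ E]
    (L₁ L₂ : E →L[ℝ] E)
    (h₁symm : ∀ x y : E, ⟪L₁ x, y⟫ = ⟪x, L₁ y⟫)
    (h₂symm : ∀ x y : E, ⟪L₂ x, y⟫ = ⟪x, L₂ y⟫)
    (hbij : Function.Bijective L₁)
    (M : E →L[ℝ] E) (hM₁ : ∀ x, M (L₁ x) = x) (hM₂ : ∀ x, L₁ (M x) = x)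
    (hnorm : ‖L₂‖ < ‖M‖⁻¹) :
    Function.Bijective (L₁ + L₂) ∧
    posEigDim (L₁ + L₂) = posEigDim L₁ ∧
    negEigDim (L₁ + L₂) = negEigDim L₁ ∧
    (posEigDim (L₁ + L₂) : ℤ) - negEigDim (L₁ + L₂) =
      (posEigDim L₁ : ℤ) - negEigDim L₁ := by
  classical
  have hL₁ : LinearMap.IsSymmetric (L₁ : E →ₗ[ℝ] E) := fun x y => h₁symm x y
  have hA : LinearMap.IsSymmetric ((L₁ + L₂ : E →L[ℝ] E) : E →ₗ[ℝ] E) := by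
    intro x y
    show ⟪(L₁ + L₂) x, y⟫ = ⟪x, (L₁ + L₂) y⟫
    rw [ContinuousLinearMap.add_apply, ContinuousLinearMap.add_apply,
      inner_add_left, inner_add_right, h₁symm, h₂symm]
  have hMinv : 0 < ‖M‖⁻¹ := (norm_nonneg L₂).trans_lt hnorm
  have hM0 : 0 < ‖M‖ := inv_pos.mp hMinv
  have hMM : ‖M‖ * ‖M‖⁻¹ = 1 := mul_inv_cancel₀ hM0.ne'
  -- injectivity of the perturbed map
  have hAinj : Function.Injective (L₁ + L₂ : E →L[ℝ] E) := by
    have hker : ∀ z : E, (L₁ + L₂) z = 0 → z = 0 := by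
      intro z hz
      rw [ContinuousLinearMap.add_apply] at hz
      have hL₁z : L₁ z = -(L₂ z) := by
        rw [eq_neg_iff_add_eq_zero]; exact hz
      by_contra hz0
      have hzpos : 0 < ‖z‖ := norm_pos_iff.mpr hz0
      have h1 : ‖z‖ ≤ ‖M‖ * ‖L₁ z‖ := by
        conv_lhs => rw [← hM₁ z]
        exact M.le_opNorm _
      rw [hL₁z, norm_neg] at h1
      have h2 : ‖L₂ z‖ ≤ ‖L₂‖ * ‖z‖ := L₂.le_opNorm z
      have hcontr : ‖z‖ < ‖z‖ := by
        calc ‖z‖ ≤ ‖M‖ * ‖L₂ z‖ := h1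
          _ ≤ ‖M‖ * (‖L₂‖ * ‖z‖) := by gcongr
          _ < ‖M‖ * (‖M‖⁻¹ * ‖z‖) := by gcongr
          _ = ‖z‖ := by rw [← mul_assoc, hMM, one_mul]
      exact lt_irrefl _ hcontr
    intro x y hxy
    have h0 : (L₁ + L₂) (x - y) = 0 := by rw [map_sub, hxy, sub_self]
    exact sub_eq_zero.mp (hker _ h0)
  have hAbij : Function.Bijective (L₁ + L₂ : E →L[ℝ] E) :=
    ⟨hAinj, (LinearMap.injective_iff_surjective
      (f := ((L₁ + L₂ : E →L[ℝ] E) : E →ₗ[ℝ] E))).mp hAinj⟩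
  -- eigenbasis of L₁
  have hn : Module.finrank ℝ E = Module.finrank ℝ E := rfl
  set b := hL₁.eigenvectorBasis hn with hb
  set α := hL₁.eigenvalues hn with hα
  have hαb : ∀ i, L₁ (b i) = α i • b i := fun i => hL₁.apply_eigenvectorBasis hn i
  have hαbd : ∀ i, ‖M‖⁻¹ ≤ |α i| := by
    intro i
    have hb1 : ‖b i‖ = 1 := b.orthonormal.1 i
    have h1 : ‖b i‖ ≤ ‖M‖ * ‖L₁ (b i)‖ := by
      conv_lhs => rw [← hM₁ (b i)]
      exact M.le_opNorm _
    rw [hαb i, norm_smul, hb1, Real.norm_eq_abs, mul_one] at h1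
    calc ‖M‖⁻¹ = ‖M‖⁻¹ * 1 := (mul_one _).symm
      _ ≤ ‖M‖⁻¹ * (‖M‖ * |α i|) := by gcongr
      _ = (‖M‖ * ‖M‖⁻¹) * |α i| := by ring
      _ = |α i| := by rw [hMM, one_mul]
  -- positive subspace of L₁
  set W₁ : Submodule ℝ E := Submodule.span ℝ (b '' {i | 0 < α i}) with hW₁
  set W₂ : Submodule ℝ E := Submodule.span ℝ (b '' {i | α i < 0}) with hW₂
  have hW₁pos : ∀ x ∈ W₁, x ≠ 0 → 0 < ⟪(L₁ + L₂) x, x⟫ := by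
    intro x hx hx0
    have hxx : 0 < ‖x‖ := norm_pos_iff.mpr hx0
    have hlb : ‖M‖⁻¹ * ‖x‖ ^ 2 ≤ ⟪L₁ x, x⟫ := by
      rw [aux_qf b α L₁ hαb x, aux_norm_sq b x, Finset.mul_sum]
      refine Finset.sum_le_sum fun i _ => ?_
      by_cases hi : 0 < α i
      · have h3 := hαbd i
        rw [abs_of_pos hi] at h3
        nlinarith [sq_nonneg (⟪b i, x⟫)]
      · rw [aux_inner_eq_zero b _ (by simpa using hi) hx]
        simp
    have hub : |⟪L₂ x, x⟫| ≤ ‖L₂‖ * ‖x‖ ^ 2 := by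
      calc |⟪L₂ x, x⟫| ≤ ‖L₂ x‖ * ‖x‖ := abs_real_inner_le_norm _ _
        _ ≤ (‖L₂‖ * ‖x‖) * ‖x‖ :=
          mul_le_mul_of_nonneg_right (L₂.le_opNorm x) (norm_nonneg x)
        _ = ‖L₂‖ * ‖x‖ ^ 2 := by ring
    have habs := abs_le.mp hub
    have hAx : ⟪(L₁ + L₂) x, x⟫ = ⟪L₁ x, x⟫ + ⟪L₂ x, x⟫ := by
      rw [ContinuousLinearMap.add_apply, inner_add_left]
    rw [hAx]
    nlinarith [sq_nonneg ‖x‖, mul_pos hxx hxx]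
  have hW₂neg : ∀ x ∈ W₂, x ≠ 0 → ⟪(L₁ + L₂) x, x⟫ < 0 := by
    intro x hx hx0
    have hxx : 0 < ‖x‖ := norm_pos_iff.mpr hx0
    have hlb : ⟪L₁ x, x⟫ ≤ -(‖M‖⁻¹ * ‖x‖ ^ 2) := by
      rw [aux_qf b α L₁ hαb x, aux_norm_sq b x, Finset.mul_sum, ← Finset.sum_neg_distrib]
      refine Finset.sum_le_sum fun i _ => ?_
      by_cases hi : α i < 0
      · have h3 := hαbd i
        rw [abs_of_neg hi] at h3
        nlinarith [sq_nonneg (⟪b i, x⟫)]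
      · rw [aux_inner_eq_zero b _ (by simpa using hi) hx]
        simp
    have hub : |⟪L₂ x, x⟫| ≤ ‖L₂‖ * ‖x‖ ^ 2 := by
      calc |⟪L₂ x, x⟫| ≤ ‖L₂ x‖ * ‖x‖ := abs_real_inner_le_norm _ _
        _ ≤ (‖L₂‖ * ‖x‖) * ‖x‖ :=
          mul_le_mul_of_nonneg_right (L₂.le_opNorm x) (norm_nonneg x)
        _ = ‖L₂‖ * ‖x‖ ^ 2 := by ring
    have habs := abs_le.mp hub
    have hAx : ⟪(L₁ + L₂) x, x⟫ = ⟪L₁ x, x⟫ + ⟪L₂ x, x⟫ := by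
      rw [ContinuousLinearMap.add_apply, inner_add_left]
    rw [hAx]
    nlinarith [sq_nonneg ‖x‖, mul_pos hxx hxx]
  -- dimension comparisons
  have hpos1 : posEigDim L₁ = Module.finrank ℝ W₁ := by
    unfold posEigDim
    rw [aux_span_eig L₁ hL₁ hn (fun μ => 0 < μ)]
  have hneg1 : negEigDim L₁ = Module.finrank ℝ W₂ := by
    unfold negEigDim
    rw [aux_span_eig L₁ hL₁ hn (fun μ => μ < 0)]
  have hple : posEigDim L₁ ≤ posEigDim (L₁ + L₂) := by
    rw [hpos1]
    exact aux_le_pos (L₁ + L₂) hA W₁ hW₁pos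
  have hnle : negEigDim L₁ ≤ negEigDim (L₁ + L₂) := by
    rw [hneg1]
    exact aux_le_neg (L₁ + L₂) hA W₂ hW₂neg
  have hs1 : posEigDim (L₁ + L₂) + negEigDim (L₁ + L₂) = Module.finrank ℝ E :=
    aux_sum_eq (L₁ + L₂) hA hAinj
  have hs2 : posEigDim L₁ + negEigDim L₁ = Module.finrank ℝ E :=
    aux_sum_eq L₁ hL₁ hbij.injective
  refine ⟨hAbij, ?_, ?_, ?_⟩ <;> omega
end

section
/- Let k, m ≥ 1, let C > 0, and let Ṡ : ℝ → M(k,ℝ) be a measurable family of matrices with ‖Ṡ(t)‖ ≤ C for all t ∈ ℝ. Let u₁, …, u_m : ℝ → ℝᵏ be square-integrable functions that are orthonormal in L²(ℝ,ℝᵏ). Then for every ε > 0 there exists η > 0 such that for all α₁, …, α_m ∈ ℝ, setting u(t) := Σᵢ αᵢ·uᵢ(t), one has | ∫_ℝ ⟨Ṡ(t)·u(t), u(t)⟩ dt − ∫_{−η}^{η} ⟨Ṡ(t)·u(t), u(t)⟩ dt | ≤ ε · ∫_ℝ ‖u(t)‖² dt. -/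
/-! With `G := ∑ᵢ ‖uᵢ‖²`, which is integrable, Cauchy–Schwarz gives `‖u t‖² ≤ (∑ᵢ αᵢ²) G t`
pointwise, while orthonormality gives `∫ ‖u‖² = ∑ᵢ αᵢ²`. The difference of the two integrals is
the integral over `|t| ≥ η`, hence at most `C (∑ᵢ αᵢ²) ∫_{|t| ≥ η} G`, and the tail of `G` is small
for large `η` independently of `α`. -/

open scoped RealInnerProductSpace
open MeasureTheory Filter Topology Set

section InnerProduct

variable {E : Type*} [NormedAddCommGroup E] [InnerProductSpace ℝ E]

theorem abs_inner_apply_self_le {A : E →L[ℝ] E} {C : ℝ} (hA : ‖A‖ ≤ C) (x : E) :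
    |⟪A x, x⟫| ≤ C * ‖x‖ ^ 2 :=
  calc |⟪A x, x⟫| ≤ ‖A x‖ * ‖x‖ := abs_real_inner_le_norm _ _
    _ ≤ C * ‖x‖ * ‖x‖ := by gcongr; exact A.le_of_opNorm_le hA x
    _ = C * ‖x‖ ^ 2 := by ring

theorem norm_sum_smul_sq_le {ι : Type*} (s : Finset ι) (α : ι → ℝ) (x : ι → E) :
    ‖∑ i ∈ s, α i • x i‖ ^ 2 ≤ (∑ i ∈ s, α i ^ 2) * ∑ i ∈ s, ‖x i‖ ^ 2 := by
  have htri : ‖∑ i ∈ s, α i • x i‖ ≤ ∑ i ∈ s, |α i| * ‖x i‖ :=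
    (norm_sum_le _ _).trans_eq (by simp only [norm_smul, Real.norm_eq_abs])
  calc ‖∑ i ∈ s, α i • x i‖ ^ 2 ≤ (∑ i ∈ s, |α i| * ‖x i‖) ^ 2 := by gcongr
    _ ≤ (∑ i ∈ s, |α i| ^ 2) * ∑ i ∈ s, ‖x i‖ ^ 2 := Finset.sum_mul_sq_le_sq_mul_sq _ _ _
    _ = (∑ i ∈ s, α i ^ 2) * ∑ i ∈ s, ‖x i‖ ^ 2 := by simp only [sq_abs]

end InnerProduct

section Integrals

variable {X E : Type*} [MeasurableSpace X] {μ : Measure X}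
  [NormedAddCommGroup E] [InnerProductSpace ℝ E]

theorem MeasureTheory.MemLp.integrable_inner {f g : X → E} (hf : MemLp f 2 μ) (hg : MemLp g 2 μ) :
    Integrable (fun x => ⟪f x, g x⟫) μ :=
  (L2.integrable_inner (𝕜 := ℝ) hf.toLp hg.toLp).congr <|
    hf.coeFn_toLp.mp <| hg.coeFn_toLp.mono fun x hgx hfx => by simp only [hfx, hgx]

theorem MeasureTheory.MemLp.integrable_inner_apply_self {S : X → E →L[ℝ] E} {C : ℝ}
    (hS : AEStronglyMeasurable S μ) (hSC : ∀ᵐ x ∂μ, ‖S x‖ ≤ C) {v : X → E} (hv : MemLp v 2 μ) :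
    Integrable (fun x => ⟪S x (v x), v x⟫) μ := by
  have hSv : MemLp (fun x => S x (v x)) 2 μ :=
    hv.of_le_mul ((ContinuousLinearMap.apply ℝ E).aestronglyMeasurable_comp₂
      hv.aestronglyMeasurable hS) (hSC.mono fun x hx => (S x).le_of_opNorm_le hx (v x))
  exact hSv.integrable_inner hv

theorem integral_norm_sum_smul_sq_of_orthonormal {ι : Type*} [Fintype ι] [DecidableEq ι]
    {u : ι → X → E} (hu : ∀ i, MemLp (u i) 2 μ)
    (horth : ∀ i j, ∫ x, ⟪u i x, u j x⟫ ∂μ = if i = j then (1 : ℝ) else 0) (α : ι → ℝ) :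
    ∫ x, ‖∑ i, α i • u i x‖ ^ 2 ∂μ = ∑ i, α i ^ 2 := by
  have hint : ∀ i j, Integrable (fun x => α i * α j * ⟪u i x, u j x⟫) μ := fun i j =>
    ((hu i).integrable_inner (hu j)).const_mul _
  have hexpand : ∀ x, ‖∑ i, α i • u i x‖ ^ 2 = ∑ i, ∑ j, α i * α j * ⟪u i x, u j x⟫ := by
    intro x
    simp only [← real_inner_self_eq_norm_sq, inner_sum, sum_inner, real_inner_smul_left,
      real_inner_smul_right]
    rw [Finset.sum_comm]
    exact Finset.sum_congr rfl fun i _ => Finset.sum_congr rfl fun j _ => by ring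
  simp_rw [hexpand]
  rw [integral_finsetSum _ fun i _ => integrable_finsetSum _ fun j _ => hint i j]
  simp_rw [integral_finsetSum _ fun j _ => hint _ j, integral_const_mul, horth]
  simp [sq]

end Integrals

theorem integral_sub_intervalIntegral_eq_setIntegral_compl {E : Type*} [NormedAddCommGroup E]
    [NormedSpace ℝ E] {f : ℝ → E} (hf : Integrable f) {a b : ℝ} (hab : a ≤ b) :
    (∫ t, f t) - ∫ t in a..b, f t = ∫ t in (Ioc a b)ᶜ, f t := by
  rw [intervalIntegral.integral_of_le hab, ← integral_add_compl measurableSet_Ioc hf,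
    add_sub_cancel_left]

theorem tendsto_setIntegral_compl_Ioc_neg {E : Type*} [NormedAddCommGroup E]
    [NormedSpace ℝ E] {f : ℝ → E} (hf : Integrable f) :
    Tendsto (fun η => ∫ t in (Ioc (-η) η)ᶜ, f t) atTop (𝓝 0) := by
  have h := (intervalIntegral_tendsto_integral hf tendsto_neg_atTop_atBot tendsto_id).const_sub
    (∫ t, f t)
  rw [sub_self] at h
  refine h.congr' ((eventually_ge_atTop 0).mono fun η hη => ?_)
  exact integral_sub_intervalIntegral_eq_setIntegral_compl hf (a := -η) (b := η) (by linarith)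

theorem stmt17_general (k m : ℕ) (C : ℝ)
    (S : ℝ → EuclideanSpace ℝ (Fin k) →L[ℝ] EuclideanSpace ℝ (Fin k))
    (hSmeas : StronglyMeasurable S)
    (hSbound : ∀ t, ‖S t‖ ≤ C)
    (u : Fin m → ℝ → EuclideanSpace ℝ (Fin k))
    (hL2 : ∀ i, MemLp (u i) 2 (volume : Measure ℝ))
    (horth : ∀ i j, ∫ t : ℝ, ⟪u i t, u j t⟫ = if i = j then (1 : ℝ) else 0) :
    ∀ ε > (0 : ℝ), ∃ η > (0 : ℝ), ∀ α : Fin m → ℝ,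
      |(∫ t : ℝ, ⟪S t (∑ i, α i • u i t), ∑ i, α i • u i t⟫) -
          ∫ t in (-η)..η, ⟪S t (∑ i, α i • u i t), ∑ i, α i • u i t⟫| ≤
        ε * ∫ t : ℝ, ‖∑ i, α i • u i t‖ ^ 2 := by
  intro ε hε
  set G : ℝ → ℝ := fun t => ∑ i, ‖u i t‖ ^ 2
  have hG : Integrable G := integrable_finsetSum _ fun i _ => (hL2 i).norm.integrable_sq
  have hC : 0 ≤ C := (norm_nonneg _).trans (hSbound 0)
  have htail : ∀ᶠ η in atTop, 0 < η ∧ C * ∫ t in (Ioc (-η) η)ᶜ, G t ≤ ε := by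
    have h := (tendsto_setIntegral_compl_Ioc_neg hG).const_mul C
    rw [mul_zero] at h
    exact (eventually_gt_atTop 0).and (h.eventually (eventually_le_nhds hε))
  obtain ⟨η, hη, hCη⟩ := htail.exists
  refine ⟨η, hη, fun α => ?_⟩
  have hv : MemLp (fun t => ∑ i, α i • u i t) 2 volume :=
    memLp_finsetSum _ fun i _ => (hL2 i).const_smul (α i)
  rw [integral_sub_intervalIntegral_eq_setIntegral_compl
      (hv.integrable_inner_apply_self hSmeas.aestronglyMeasurable (ae_of_all _ hSbound))
      (by linarith), integral_norm_sum_smul_sq_of_orthonormal hL2 horth]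
  calc |∫ t in (Ioc (-η) η)ᶜ, ⟪S t (∑ i, α i • u i t), ∑ i, α i • u i t⟫|
        ≤ ∫ t in (Ioc (-η) η)ᶜ, C * (∑ i, α i ^ 2) * G t := by
        rw [← Real.norm_eq_abs]
        refine norm_integral_le_of_norm_le (hG.const_mul _).restrict (ae_of_all _ fun t => ?_)
        rw [Real.norm_eq_abs, mul_assoc]
        exact (abs_inner_apply_self_le (hSbound t) _).trans
          (by gcongr; exact norm_sum_smul_sq_le _ _ _)
    _ = (∑ i, α i ^ 2) * (C * ∫ t in (Ioc (-η) η)ᶜ, G t) := by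
        rw [integral_const_mul]; ring
    _ ≤ ε * ∑ i, α i ^ 2 := by
        rw [mul_comm ε]; gcongr

/-- Let `Ṡ : ℝ → M(k,ℝ)` be a measurable family of matrices (viewed as
operators on `ℝᵏ`) with `‖Ṡ(t)‖ ≤ C`, and let `u₁, …, u_m` be square-integrable functions,
orthonormal in `L²(ℝ,ℝᵏ)`. Then for every `ε > 0` there is `η > 0` such that for all
coefficients `α` and `u := Σᵢ αᵢ uᵢ`,
`|∫_ℝ ⟨Ṡ u, u⟩ − ∫_{−η}^{η} ⟨Ṡ u, u⟩| ≤ ε · ∫_ℝ ‖u‖²`. -/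
theorem stmt17 (k m : ℕ) (hk : 1 ≤ k) (hm : 1 ≤ m) (C : ℝ) (hC : 0 < C)
    (S : ℝ → EuclideanSpace ℝ (Fin k) →L[ℝ] EuclideanSpace ℝ (Fin k))
    (hSmeas : StronglyMeasurable S)
    (hSbound : ∀ t, ‖S t‖ ≤ C)
    (u : Fin m → ℝ → EuclideanSpace ℝ (Fin k))
    (hL2 : ∀ i, MemLp (u i) 2 (volume : Measure ℝ))
    (horth : ∀ i j, ∫ t : ℝ, ⟪u i t, u j t⟫ = if i = j then (1 : ℝ) else 0) :
    ∀ ε > (0 : ℝ), ∃ η > (0 : ℝ), ∀ α : Fin m → ℝ,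
      |(∫ t : ℝ, ⟪S t (∑ i, α i • u i t), ∑ i, α i • u i t⟫) -
          ∫ t in (-η)..η, ⟪S t (∑ i, α i • u i t), ∑ i, α i • u i t⟫| ≤
        ε * ∫ t : ℝ, ‖∑ i, α i • u i t‖ ^ 2 :=
  stmt17_general k m C S hSmeas hSbound u hL2 horth
end
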